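/- arXiv:2005.09201 — 7 statements merged into one kernel-verified Lean document; each statement's English description precedes it below -/
import Mathlib

section
/- Let B = {b_1 < b_2 < b_3 < …} be an infinite strictly increasing sequence of integers with b_1 ≥ 11, b_2 = 3b_1 + 5, b_3 = 3b_2 + 2, and b_{n+1} = 3b_n + 4b_{n-1} for all n ≥ 3. Let k ≥ 4, and let A_k be a nonempty finite set of positive integers, each less than b_k + 2b_{k−2}, such that P(A_k) = [0, b_k + b_{k−1}] \ ({b_1, …, b_k} ∪ {b_k + b_{k−1} − b_i : i = 1, …, k−2}). Then, with A_{k+1} = A_k ∪ {b_k + b_{k−1} − b_{k−2}, b_k + 2b_{k−1} − b_{k−2}, b_k + 2b_{k−2}}, one has P(A_{k+1}) = [0, b_{k+1} + b_k] \ ({b_1, …, b_{k+1}} ∪ {b_{k+1} + b_k − b_i : i = 1, …, k−1}). -/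
/-- The set of all finite subset sums of `A`: all sums of finitely many
pairwise distinct elements of `A`; by convention `0 ∈ subsetSums A`. -/
def subsetSums (A : Set ℕ) : Set ℕ :=
  {n | ∃ F : Finset ℕ, ↑F ⊆ A ∧ F.sum id = n}

lemma sums_union_decomp {A T : Finset ℕ} {x : ℕ}
    (hx : x ∈ subsetSums ↑(A ∪ T)) :
    ∃ u ∈ subsetSums (↑A : Set ℕ), ∃ t ∈ subsetSums (↑T : Set ℕ), x = u + t := by
  obtain ⟨F, hF, rfl⟩ := hx
  have hF' : F ⊆ A ∪ T := by exact_mod_cast hF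
  refine ⟨(F ∩ A).sum id, ⟨F ∩ A, by exact_mod_cast Finset.inter_subset_right, rfl⟩,
    (F \ A).sum id, ⟨F \ A, ?_, rfl⟩, ?_⟩
  · intro y hy
    simp only [Finset.coe_sdiff, Set.mem_diff, Finset.mem_coe] at hy
    have := hF' hy.1
    simp only [Finset.mem_union] at this
    simp only [Finset.mem_coe]
    tauto
  · rw [← Finset.sum_inter_add_sum_sdiff F A id]

lemma sums_union_mk {A T : Finset ℕ} (h : Disjoint A T) {u t : ℕ}
    (hu : u ∈ subsetSums (↑A : Set ℕ)) (ht : t ∈ subsetSums (↑T : Set ℕ)) :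
    u + t ∈ subsetSums ↑(A ∪ T) := by
  obtain ⟨F1, h1, rfl⟩ := hu
  obtain ⟨F2, h2, rfl⟩ := ht
  have h1' : F1 ⊆ A := by exact_mod_cast h1
  have h2' : F2 ⊆ T := by exact_mod_cast h2
  refine ⟨F1 ∪ F2, ?_, ?_⟩
  · push_cast
    exact Set.union_subset_union h1 h2
  · rw [Finset.sum_union (h.mono h1' h2')]

lemma triple_sum_cases {p q r : ℕ} (hpq : p ≠ q) (hpr : p ≠ r) (hqr : q ≠ r) {t : ℕ}
    (ht : t ∈ subsetSums (↑({p, q, r} : Finset ℕ) : Set ℕ)) :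
    t = 0 ∨ t = p ∨ t = q ∨ t = r ∨ t = p + q ∨ t = p + r ∨ t = q + r ∨ t = p + q + r := by
  obtain ⟨F, hF, rfl⟩ := ht
  have hF' : F ⊆ {p, q, r} := by exact_mod_cast hF
  have hsum : F.sum id = ∑ x ∈ ({p, q, r} : Finset ℕ), if x ∈ F then x else 0 := by
    rw [Finset.sum_ite_mem, Finset.inter_eq_right.mpr hF']
    rfl
  rw [hsum, Finset.sum_insert (by simp [hpq, hpr]), Finset.sum_insert (by simp [hqr]),
    Finset.sum_singleton]
  split_ifs <;> simp <;> omega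

lemma triple_sum_mem {p q r : ℕ} (hpq : p ≠ q) (hpr : p ≠ r) (hqr : q ≠ r) {t : ℕ}
    (h : t = 0 ∨ t = p ∨ t = q ∨ t = r ∨ t = p + q ∨ t = p + r ∨ t = q + r ∨ t = p + q + r) :
    t ∈ subsetSums (↑({p, q, r} : Finset ℕ) : Set ℕ) := by
  have h0 : (0 : ℕ) ∈ subsetSums (↑({p, q, r} : Finset ℕ) : Set ℕ) := ⟨∅, by simp, rfl⟩
  have h1 : p ∈ subsetSums (↑({p, q, r} : Finset ℕ) : Set ℕ) :=
    ⟨({p} : Finset ℕ), by simp, by simp⟩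
  have h2 : q ∈ subsetSums (↑({p, q, r} : Finset ℕ) : Set ℕ) :=
    ⟨({q} : Finset ℕ), by intro y hy; simp at hy; simp [hy], by simp⟩
  have h3 : r ∈ subsetSums (↑({p, q, r} : Finset ℕ) : Set ℕ) :=
    ⟨({r} : Finset ℕ), by intro y hy; simp at hy; simp [hy], by simp⟩
  have h4 : p + q ∈ subsetSums (↑({p, q, r} : Finset ℕ) : Set ℕ) :=
    ⟨({p, q} : Finset ℕ), by intro y hy; simp at hy; rcases hy with rfl | rfl <;> simp,
      by rw [Finset.sum_pair hpq]; rfl⟩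
  have h5 : p + r ∈ subsetSums (↑({p, q, r} : Finset ℕ) : Set ℕ) :=
    ⟨({p, r} : Finset ℕ), by intro y hy; simp at hy; rcases hy with rfl | rfl <;> simp,
      by rw [Finset.sum_pair hpr]; rfl⟩
  have h6 : q + r ∈ subsetSums (↑({p, q, r} : Finset ℕ) : Set ℕ) :=
    ⟨({q, r} : Finset ℕ), by intro y hy; simp at hy; rcases hy with rfl | rfl <;> simp,
      by rw [Finset.sum_pair hqr]; simp [Nat.add_assoc]⟩
  have h7 : p + q + r ∈ subsetSums (↑({p, q, r} : Finset ℕ) : Set ℕ) :=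
    ⟨({p, q, r} : Finset ℕ), by simp, by
      rw [Finset.sum_insert (by simp [hpq, hpr]), Finset.sum_pair hqr]; simp [Nat.add_assoc]⟩
  rcases h with rfl | rfl | rfl | rfl | rfl | rfl | rfl | rfl <;> assumption


theorem stmt_12 (b : ℕ → ℕ)
    (hbmono : ∀ n, 1 ≤ n → b n < b (n + 1))
    (hb1 : 11 ≤ b 1)
    (hb2 : b 2 = 3 * b 1 + 5)
    (hb3 : b 3 = 3 * b 2 + 2)
    (hrec : ∀ n, 3 ≤ n → b (n + 1) = 3 * b n + 4 * b (n - 1))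
    (k : ℕ) (hk : 4 ≤ k)
    (A : Finset ℕ) (hAne : A.Nonempty)
    (hAelts : ∀ x ∈ A, 0 < x ∧ x < b k + 2 * b (k - 2))
    (hPA : subsetSums ↑A =
      Set.Icc 0 (b k + b (k - 1)) \
        (b '' Set.Icc 1 k ∪
          (fun i => b k + b (k - 1) - b i) '' Set.Icc 1 (k - 2))) :
    subsetSums
        ↑(A ∪ {b k + b (k - 1) - b (k - 2), b k + 2 * b (k - 1) - b (k - 2),
            b k + 2 * b (k - 2)}) =
      Set.Icc 0 (b (k + 1) + b k) \
        (b '' Set.Icc 1 (k + 1) ∪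
          (fun i => b (k + 1) + b k - b i) '' Set.Icc 1 (k - 1)) := by
  -- basic monotonicity facts
  have bmono_le : ∀ i j, 1 ≤ i → i ≤ j → b i ≤ b j := by
    intro i j h1 h2
    induction j with
    | zero => omega
    | succ n ih =>
      rcases Nat.lt_or_ge i (n + 1) with h | h
      · have h3 := hbmono n (by omega)
        have h4 := ih (by omega)
        omega
      · have h3 : i = n + 1 := by omega
        exact h3 ▸ le_rfl
  have bge11 : ∀ n, 1 ≤ n → 11 ≤ b n := fun n hn => le_trans hb1 (bmono_le 1 n le_rfl hn)
  have G : ∀ n, 1 ≤ n → 3 * b n + 2 ≤ b (n + 1) := by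
    intro n hn
    match n with
    | 1 => show 3 * b 1 + 2 ≤ b 2; omega
    | 2 => show 3 * b 2 + 2 ≤ b 3; omega
    | (m + 3) =>
      have h := hrec (m + 3) (by omega)
      have h2 : m + 3 - 1 = m + 2 := by omega
      rw [h2] at h
      have := bge11 (m + 2) (by omega)
      omega
  have F1 : ∀ i j l, 1 ≤ i → 1 ≤ j → 1 ≤ l → b i + b j ≠ b l := by
    intro i j l hi hj hl heq
    have hi11 := bge11 i hi
    have hj11 := bge11 j hj
    rcases le_total i j with hij | hij
    · have hij' : b i ≤ b j := bmono_le i j hi hij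
      rcases le_or_gt l j with h | h
      · have := bmono_le l j hl h
        omega
      · have h5 := bmono_le (j + 1) l (by omega) h
        have h6 := G j hj
        omega
    · have hij' : b j ≤ b i := bmono_le j i hj hij
      rcases le_or_gt l i with h | h
      · have := bmono_le l i hl h
        omega
      · have h5 := bmono_le (i + 1) l (by omega) h
        have h6 := G i hi
        omega
  -- abbreviations
  set E := b (k - 2) with hE
  set D := b (k - 1) with hD
  have hbkD : b k = 3 * D + 4 * E := by
    have h := hrec (k - 1) (by omega)
    have h1 : k - 1 + 1 = k := by omega
    have h2 : k - 1 - 1 = k - 2 := by omega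
    rw [h1, h2] at h
    rw [h, hD, hE]
  have hbk1 : b (k + 1) = 13 * D + 12 * E := by
    have h := hrec k (by omega)
    rw [hbkD] at h
    omega
  have hDE : 3 * E + 2 ≤ D := by
    have h := G (k - 2) (by omega)
    have h1 : k - 2 + 1 = k - 1 := by omega
    rw [h1] at h
    omega
  have hE38 : 38 ≤ E := by
    have h := bmono_le 2 (k - 2) (by omega) (by omega)
    omega
  have hbsmall : ∀ i, 1 ≤ i → i ≤ k - 2 → 11 ≤ b i ∧ b i ≤ E :=
    fun i h1 h2 => ⟨bge11 i h1, hE ▸ bmono_le i (k - 2) h1 h2⟩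
  -- rewrite hypothesis and goal in terms of D and E
  rw [show b k + D = 4 * D + 4 * E from by omega] at hPA
  rw [show b (k + 1) + b k = 16 * D + 16 * E from by omega,
    show b k + D - E = 4 * D + 3 * E from by omega,
    show b k + 2 * D - E = 5 * D + 3 * E from by omega,
    show b k + 2 * E = 3 * D + 6 * E from by omega]
  have mem_PA : ∀ u, u ∈ subsetSums (↑A : Set ℕ) ↔
      u ≤ 4 * D + 4 * E ∧ (∀ i, 1 ≤ i → i ≤ k → b i ≠ u) ∧
        (∀ i, 1 ≤ i → i ≤ k - 2 → 4 * D + 4 * E - b i ≠ u) := by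
    intro u
    rw [hPA]
    simp only [Set.mem_diff, Set.mem_Icc, Set.mem_union, Set.mem_image, not_or, not_exists,
      not_and]
    constructor
    · rintro ⟨⟨-, h1⟩, h2, h3⟩
      exact ⟨h1, fun i hi1 hi2 => h2 i ⟨hi1, hi2⟩, fun i hi1 hi2 => h3 i ⟨hi1, hi2⟩⟩
    · rintro ⟨h1, h2, h3⟩
      exact ⟨⟨Nat.zero_le _, h1⟩, fun i hi => h2 i hi.1 hi.2, fun i hi => h3 i hi.1 hi.2⟩
  have memRHS : ∀ x : ℕ, (x ∈ Set.Icc 0 (16 * D + 16 * E) \ (b '' Set.Icc 1 (k + 1) ∪ (fun i => 16 * D + 16 * E - b i) '' Set.Icc 1 (k - 1))) ↔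
      x ≤ 16 * D + 16 * E ∧ (∀ i, 1 ≤ i → i ≤ k + 1 → b i ≠ x) ∧
        (∀ i, 1 ≤ i → i ≤ k - 1 → 16 * D + 16 * E - b i ≠ x) := by
    intro x
    simp only [Set.mem_diff, Set.mem_Icc, Set.mem_union, Set.mem_image, not_or, not_exists,
      not_and]
    constructor
    · rintro ⟨⟨-, h1⟩, h2, h3⟩
      exact ⟨h1, fun i hi1 hi2 => h2 i ⟨hi1, hi2⟩, fun i hi1 hi2 => h3 i ⟨hi1, hi2⟩⟩
    · rintro ⟨h1, h2, h3⟩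
      exact ⟨⟨Nat.zero_le _, h1⟩, fun i hi => h2 i hi.1 hi.2, fun i hi => h3 i hi.1 hi.2⟩
  -- membership helpers for P(A)
  have caseI : ∀ i, 1 ≤ i → i ≤ k → (i ≤ k - 2 ∨ i = k - 1 ∨ i = k) := fun i h1 h2 => by omega
  have safeMid : ∀ u, E < u → u < 4 * D + 3 * E → u ≠ D → u ≠ 3 * D + 4 * E →
      u ∈ subsetSums (↑A : Set ℕ) := by
    intro u h1 h2 h3 h4
    refine (mem_PA u).mpr ⟨by omega, ?_, ?_⟩
    · intro i hi1 hi2 heq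
      rcases caseI i hi1 hi2 with h | h | h
      · have := hbsmall i hi1 h
        omega
      · rw [h, ← hD] at heq
        omega
      · rw [h, hbkD] at heq
        omega
    · intro i hi1 hi2 heq
      have := hbsmall i hi1 hi2
      omega
  have sLow : ∀ u, u ≤ E → (∀ i, 1 ≤ i → i ≤ k - 2 → b i ≠ u) →
      u ∈ subsetSums (↑A : Set ℕ) := by
    intro u h1 h2
    refine (mem_PA u).mpr ⟨by omega, ?_, ?_⟩
    · intro i hi1 hi2 heq
      rcases caseI i hi1 hi2 with h | h | h
      · exact h2 i hi1 h heq
      · rw [h, ← hD] at heq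
        omega
      · rw [h, hbkD] at heq
        omega
    · intro i hi1 hi2 heq
      have := hbsmall i hi1 hi2
      omega
  have sTop : ∀ s, s ≤ E → (∀ i, 1 ≤ i → i ≤ k - 2 → b i ≠ s) →
      4 * D + 4 * E - s ∈ subsetSums (↑A : Set ℕ) := by
    intro s h1 h2
    refine (mem_PA _).mpr ⟨by omega, ?_, ?_⟩
    · intro i hi1 hi2 heq
      rcases caseI i hi1 hi2 with h | h | h
      · have := hbsmall i hi1 h
        omega
      · rw [h, ← hD] at heq
        omega
      · rw [h, hbkD] at heq
        omega
    · intro i hi1 hi2 heq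
      have h3 := hbsmall i hi1 hi2
      exact h2 i hi1 hi2 (by omega)
  have sF1low : ∀ i, 1 ≤ i → i ≤ k - 2 → E - b i ∈ subsetSums (↑A : Set ℕ) := by
    intro i hi1 hi2
    have h3 := hbsmall i hi1 hi2
    refine sLow _ (by omega) ?_
    intro j hj1 hj2 heq
    have h4 := hbsmall j hj1 hj2
    have h5 : b j + b i = b (k - 2) := by omega
    exact F1 j i (k - 2) hj1 hi1 (by omega) h5
  have sF1top : ∀ i, 1 ≤ i → i ≤ k - 2 → 4 * D + 3 * E + b i ∈ subsetSums (↑A : Set ℕ) := by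
    intro i hi1 hi2
    have h3 := hbsmall i hi1 hi2
    have h6 : ∀ j, 1 ≤ j → j ≤ k - 2 → b j ≠ E - b i := by
      intro j hj1 hj2 heq
      have h4 := hbsmall j hj1 hj2
      have h5 : b j + b i = b (k - 2) := by omega
      exact F1 j i (k - 2) hj1 hi1 (by omega) h5
    have := sTop (E - b i) (by omega) h6
    rwa [show 4 * D + 4 * E - (E - b i) = 4 * D + 3 * E + b i from by omega] at this
  -- the three new elements and disjointness
  have hdisj : Disjoint A ({4 * D + 3 * E, 5 * D + 3 * E, 3 * D + 6 * E} : Finset ℕ) := by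
    rw [Finset.disjoint_left]
    intro a ha hmem
    have h1 := (hAelts a ha).2
    rw [show b k + 2 * E = 3 * D + 6 * E from by omega] at h1
    simp only [Finset.mem_insert, Finset.mem_singleton] at hmem
    omega
  have hpq : (4*D+3*E : ℕ) ≠ 5*D+3*E := by omega
  have hpr : (4*D+3*E : ℕ) ≠ 3*D+6*E := by omega
  have hqr : (5*D+3*E : ℕ) ≠ 3*D+6*E := by omega
  ext x
  rw [memRHS]
  constructor
  · -- forward direction
    intro hx
    obtain ⟨u, hu, t, ht, rfl⟩ := sums_union_decomp hx
    obtain ⟨hu1, hu2, hu3⟩ := (mem_PA u).mp hu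
    have hts := triple_sum_cases hpq hpr hqr ht
    refine ⟨by rcases hts with rfl|rfl|rfl|rfl|rfl|rfl|rfl|rfl <;> omega, ?_, ?_⟩
    · intro i h1 h2 heq
      by_cases hik : i ≤ k - 2
      · have hb := hbsmall i h1 hik
        rcases hts with rfl|rfl|rfl|rfl|rfl|rfl|rfl|rfl
        · exact hu2 i h1 (by omega) (by omega)
        all_goals omega
      · by_cases hik1 : i = k - 1
        · rw [hik1, ← hD] at heq
          rcases hts with rfl|rfl|rfl|rfl|rfl|rfl|rfl|rfl
          · exact hu2 (k-1) (by omega) (by omega) (by rw [← hD]; omega)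
          all_goals omega
        · by_cases hik2 : i = k
          · rw [hik2, hbkD] at heq
            rcases hts with rfl|rfl|rfl|rfl|rfl|rfl|rfl|rfl
            · exact hu2 k (by omega) (by omega) (by rw [hbkD]; omega)
            all_goals omega
          · have hik3 : i = k + 1 := by omega
            rw [hik3, hbk1] at heq
            rcases hts with rfl|rfl|rfl|rfl|rfl|rfl|rfl|rfl
            all_goals try omega
            · exact hu2 (k-1) (by omega) (by omega) (by rw [← hD]; omega)
    · intro i h1 h2 heq
      by_cases hik : i ≤ k - 2
      · have hb := hbsmall i h1 hik
        rcases hts with rfl|rfl|rfl|rfl|rfl|rfl|rfl|rfl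
        all_goals try omega
        · exact hu3 i h1 hik (by omega)
      · have hik1 : i = k - 1 := by omega
        rw [hik1, ← hD] at heq
        rcases hts with rfl|rfl|rfl|rfl|rfl|rfl|rfl|rfl
        all_goals try omega
        · exact hu2 k (by omega) (by omega) (by rw [hbkD]; omega)
  · -- backward direction
    rintro ⟨hx0, hbx, hmx⟩
    have mk : ∀ t u, t ∈ subsetSums (↑({4*D+3*E, 5*D+3*E, 3*D+6*E} : Finset ℕ) : Set ℕ) →
        u ∈ subsetSums (↑A : Set ℕ) → x = u + t →
        x ∈ subsetSums (↑(A ∪ ({4*D+3*E, 5*D+3*E, 3*D+6*E} : Finset ℕ)) : Set ℕ) :=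
      fun t u h1 h2 h3 => h3 ▸ sums_union_mk hdisj h2 h1
    have m0 : (0:ℕ) ∈ subsetSums (↑({4*D+3*E, 5*D+3*E, 3*D+6*E} : Finset ℕ) : Set ℕ) :=
      triple_sum_mem hpq hpr hqr (Or.inl rfl)
    have mp := triple_sum_mem hpq hpr hqr (t := 4*D+3*E) (Or.inr (Or.inl rfl))
    have mq := triple_sum_mem hpq hpr hqr (t := 5*D+3*E) (Or.inr (Or.inr (Or.inl rfl)))
    have mr := triple_sum_mem hpq hpr hqr (t := 3*D+6*E) (Or.inr (Or.inr (Or.inr (Or.inl rfl))))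
    have mpq : (9*D+6*E:ℕ) ∈ subsetSums (↑({4*D+3*E, 5*D+3*E, 3*D+6*E} : Finset ℕ) : Set ℕ) := by
      have := triple_sum_mem hpq hpr hqr (t := 4*D+3*E + (5*D+3*E))
        (Or.inr (Or.inr (Or.inr (Or.inr (Or.inl rfl)))))
      rwa [show 4*D+3*E + (5*D+3*E) = 9*D+6*E from by ring] at this
    have mpr' : (7*D+9*E:ℕ) ∈ subsetSums (↑({4*D+3*E, 5*D+3*E, 3*D+6*E} : Finset ℕ) : Set ℕ) := by
      have := triple_sum_mem hpq hpr hqr (t := 4*D+3*E + (3*D+6*E))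
        (Or.inr (Or.inr (Or.inr (Or.inr (Or.inr (Or.inl rfl))))))
      rwa [show 4*D+3*E + (3*D+6*E) = 7*D+9*E from by ring] at this
    have mqr : (8*D+9*E:ℕ) ∈ subsetSums (↑({4*D+3*E, 5*D+3*E, 3*D+6*E} : Finset ℕ) : Set ℕ) := by
      have := triple_sum_mem hpq hpr hqr (t := 5*D+3*E + (3*D+6*E))
        (Or.inr (Or.inr (Or.inr (Or.inr (Or.inr (Or.inr (Or.inl rfl)))))))
      rwa [show 5*D+3*E + (3*D+6*E) = 8*D+9*E from by ring] at this
    have mpqr : (12*D+12*E:ℕ) ∈ subsetSums (↑({4*D+3*E, 5*D+3*E, 3*D+6*E} : Finset ℕ) : Set ℕ) := by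
      have := triple_sum_mem hpq hpr hqr (t := 4*D+3*E + (5*D+3*E) + (3*D+6*E))
        (Or.inr (Or.inr (Or.inr (Or.inr (Or.inr (Or.inr (Or.inr rfl)))))))
      rwa [show 4*D+3*E + (5*D+3*E) + (3*D+6*E) = 12*D+12*E from by ring] at this
    by_cases c1 : x < 4*D+3*E
    · refine mk 0 x m0 ((mem_PA x).mpr ⟨by omega, fun i h1 h2 => hbx i h1 (by omega),
        fun i h1 h2 heq => ?_⟩) (by omega)
      have := hbsmall i h1 h2
      omega
    by_cases c2 : x ≤ 4*D+4*E
    · by_cases hs : ∃ i, 1 ≤ i ∧ i ≤ k - 2 ∧ b i = 4*D+4*E - x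
      · obtain ⟨i, hi1, hi2, hieq⟩ := hs
        have hb := hbsmall i hi1 hi2
        exact mk (4*D+3*E) (E - b i) mp (sF1low i hi1 hi2) (by omega)
      · push_neg at hs
        have h := sTop (4*D+4*E - x) (by omega) (fun i h1 h2 => hs i h1 h2)
        exact mk 0 x m0 (by rwa [show 4*D+4*E - (4*D+4*E - x) = x from by omega] at h) (by omega)
    by_cases c3 : x < 5*D+3*E
    · exact mk (4*D+3*E) (x - (4*D+3*E)) mp
        (safeMid _ (by omega) (by omega) (by omega) (by omega)) (by omega)
    by_cases c4 : x ≤ 5*D+4*E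
    · by_cases hs : ∃ i, 1 ≤ i ∧ i ≤ k - 2 ∧ b i = x - (5*D+3*E)
      · obtain ⟨i, hi1, hi2, hieq⟩ := hs
        have hb := hbsmall i hi1 hi2
        exact mk (4*D+3*E) (x - (4*D+3*E)) mp
          (safeMid _ (by omega) (by omega) (by omega) (by omega)) (by omega)
      · push_neg at hs
        exact mk (5*D+3*E) (x - (5*D+3*E)) mq
          (sLow _ (by omega) (fun i h1 h2 => hs i h1 h2)) (by omega)
    by_cases c5 : x < 7*D+7*E
    · exact mk (4*D+3*E) (x - (4*D+3*E)) mp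
        (safeMid _ (by omega) (by omega) (by omega) (by omega)) (by omega)
    by_cases c6 : x < 8*D+7*E
    · exact mk (5*D+3*E) (x - (5*D+3*E)) mq
        (safeMid _ (by omega) (by omega) (by omega) (by omega)) (by omega)
    by_cases c7 : x = 8*D+7*E
    · exact mk (7*D+9*E) (D - 2*E) mpr'
        (safeMid _ (by omega) (by omega) (by omega) (by omega)) (by omega)
    by_cases c8 : x < 9*D+6*E
    · exact mk (5*D+3*E) (x - (5*D+3*E)) mq
        (safeMid _ (by omega) (by omega) (by omega) (by omega)) (by omega)
    by_cases c9 : x ≤ 9*D+7*E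
    · exact mk (7*D+9*E) (x - (7*D+9*E)) mpr'
        (safeMid _ (by omega) (by omega) (by omega) (by omega)) (by omega)
    by_cases c10 : x < 10*D+13*E
    · exact mk (7*D+9*E) (x - (7*D+9*E)) mpr'
        (safeMid _ (by omega) (by omega) (by omega) (by omega)) (by omega)
    by_cases c11 : x = 10*D+13*E
    · exact mk (8*D+9*E) (2*D+4*E) mqr
        (safeMid _ (by omega) (by omega) (by omega) (by omega)) (by omega)
    by_cases c12 : x < 11*D+12*E
    · exact mk (7*D+9*E) (x - (7*D+9*E)) mpr'
        (safeMid _ (by omega) (by omega) (by omega) (by omega)) (by omega)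
    by_cases c13 : x < 11*D+13*E
    · exact mk (8*D+9*E) (x - (8*D+9*E)) mqr
        (safeMid _ (by omega) (by omega) (by omega) (by omega)) (by omega)
    by_cases c14 : x = 11*D+13*E
    · exact mk (9*D+6*E) (2*D+7*E) mpq
        (safeMid _ (by omega) (by omega) (by omega) (by omega)) (by omega)
    by_cases c15 : x < 12*D+12*E
    · exact mk (8*D+9*E) (x - (8*D+9*E)) mqr
        (safeMid _ (by omega) (by omega) (by omega) (by omega)) (by omega)
    by_cases c16 : x ≤ 12*D+13*E
    · by_cases hs : ∃ i, 1 ≤ i ∧ i ≤ k - 2 ∧ b i = x - (12*D+12*E)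
      · obtain ⟨i, hi1, hi2, hieq⟩ := hs
        have hb := hbsmall i hi1 hi2
        exact mk (8*D+9*E) (4*D+3*E + b i) mqr (sF1top i hi1 hi2) (by omega)
      · push_neg at hs
        exact mk (12*D+12*E) (x - (12*D+12*E)) mpqr
          (sLow _ (by omega) (fun i h1 h2 => hs i h1 h2)) (by omega)
    by_cases c17 : x < 13*D+9*E
    · exact mk (9*D+6*E) (x - (9*D+6*E)) mpq
        (safeMid _ (by omega) (by omega) (by omega) (by omega)) (by omega)
    by_cases c18 : x ≤ 13*D+10*E
    · by_cases h17 : x - (12*D+12*E) ≤ E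
      · by_cases hs : ∃ i, 1 ≤ i ∧ i ≤ k - 2 ∧ b i = x - (12*D+12*E)
        · obtain ⟨i, hi1, hi2, hieq⟩ := hs
          have hb := hbsmall i hi1 hi2
          exact mk (8*D+9*E) (4*D+3*E + b i) mqr (sF1top i hi1 hi2) (by omega)
        · push_neg at hs
          exact mk (12*D+12*E) (x - (12*D+12*E)) mpqr
            (sLow _ h17 (fun i h1 h2 => hs i h1 h2)) (by omega)
      · exact mk (12*D+12*E) (x - (12*D+12*E)) mpqr
          (safeMid _ (by omega) (by omega) (by omega) (by omega)) (by omega)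
    · refine mk (12*D+12*E) (x - (12*D+12*E)) mpqr
        ((mem_PA _).mpr ⟨by omega, ?_, ?_⟩) (by omega)
      · intro i h1 h2 heq
        rcases caseI i h1 h2 with h | h | h
        · have := hbsmall i h1 h
          omega
        · rw [h, ← hD] at heq
          have := hbx (k+1) (by omega) (by omega)
          rw [hbk1] at this
          omega
        · rw [h, hbkD] at heq
          have := hmx (k-1) (by omega) (by omega)
          rw [← hD] at this
          omega
      · intro i h1 h2 heq
        have hb := hbsmall i h1 h2
        have := hmx i h1 (by omega)
        omega
end

section
/- Let B = {b_1 < b_2 < b_3 < …} be an infinite strictly increasing sequence of integers with b_1 ≥ 11, b_2 = 3b_1 + 5, b_3 = 3b_2 + 2, and b_{n+1} = 3b_n + 4b_{n-1} for all n ≥ 3. Let k ≥ 4, and let A_k be a nonempty finite set of positive integers, each less than b_k + 2b_{k−2}, such that P(A_k) = [0, b_k + b_{k−1}] \ ({b_1, …, b_k} ∪ {b_k + b_{k−1} − b_i : i = 1, …, k−2}). Then P(A_k ∪ {b_k + b_{k−1} − b_{k−2}}) = [0, 2b_k + 2b_{k−1} − b_{k−2}] \ ({b_1, …, b_k} ∪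 {2b_k + 2b_{k−1} − b_{k−2} − b_i : i = 1, …, k}). -/
lemma subsetSums_union_singleton (A : Finset ℕ) (c : ℕ) (hc : c ∉ A) :
    subsetSums ↑(A ∪ {c}) = subsetSums ↑A ∪ (fun x => c + x) '' subsetSums ↑A := by
  ext n
  simp only [subsetSums, Set.mem_setOf_eq, Set.mem_union, Set.mem_image, Finset.coe_union,
    Finset.coe_singleton]
  constructor
  · rintro ⟨F, hF, rfl⟩
    by_cases hcF : c ∈ F
    · right
      refine ⟨(F.erase c).sum id, ⟨F.erase c, ?_, rfl⟩, ?_⟩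
      · intro x hx
        have hx' : x ∈ F ∧ x ≠ c := by simpa using hx
        rcases hF hx'.1 with h | h
        · exact h
        · exact absurd (by simpa using h) hx'.2
      · simpa using Finset.add_sum_erase F id hcF
    · left
      refine ⟨F, ?_, rfl⟩
      intro x hx
      have hxF : x ∈ F := by simpa using hx
      rcases hF hxF with h | h
      · exact h
      · exact absurd hxF (by simp at h; subst h; exact hcF)
  · rintro (⟨F, hF, rfl⟩ | ⟨x, ⟨F, hF, rfl⟩, rfl⟩)
    · exact ⟨F, fun x hx => Or.inl (hF hx), rfl⟩
    · have hcF : c ∉ F := fun h => hc (by simpa using hF (by simpa using h))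
      refine ⟨insert c F, ?_, ?_⟩
      · intro x hx
        rcases Finset.mem_insert.mp (by simpa using hx) with rfl | h
        · exact Or.inr rfl
        · exact Or.inl (hF (by simpa using h))
      · simp [Finset.sum_insert hcF]

theorem stmt_13 (b : ℕ → ℕ)
    (hbmono : ∀ n, 1 ≤ n → b n < b (n + 1))
    (hb1 : 11 ≤ b 1)
    (hb2 : b 2 = 3 * b 1 + 5)
    (hb3 : b 3 = 3 * b 2 + 2)
    (hrec : ∀ n, 3 ≤ n → b (n + 1) = 3 * b n + 4 * b (n - 1))
    (k : ℕ) (hk : 4 ≤ k)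
    (A : Finset ℕ) (hAne : A.Nonempty)
    (hAelts : ∀ x ∈ A, 0 < x ∧ x < b k + 2 * b (k - 2))
    (hPA : subsetSums ↑A =
      Set.Icc 0 (b k + b (k - 1)) \
        (b '' Set.Icc 1 k ∪
          (fun i => b k + b (k - 1) - b i) '' Set.Icc 1 (k - 2))) :
    subsetSums ↑(A ∪ {b k + b (k - 1) - b (k - 2)}) =
      Set.Icc 0 (2 * b k + 2 * b (k - 1) - b (k - 2)) \
        (b '' Set.Icc 1 k ∪
          (fun i => 2 * b k + 2 * b (k - 1) - b (k - 2) - b i) ''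
            Set.Icc 1 k) := by
  -- basic monotonicity facts
  have hstrict : ∀ i j, 1 ≤ i → i < j → b i < b j := by
    intro i j hi hij
    induction j with
    | zero => omega
    | succ n ih =>
      rcases Nat.lt_succ_iff_lt_or_eq.mp hij with h | h
      · exact (ih h).trans (hbmono n (by omega))
      · subst h; exact hbmono i hi
  have hle : ∀ i j, 1 ≤ i → i ≤ j → b i ≤ b j := by
    intro i j hi hij
    rcases eq_or_lt_of_le hij with rfl | h
    · exact le_rfl
    · exact (hstrict i j hi h).le
  have hpos : ∀ n, 1 ≤ n → 11 ≤ b n := by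
    intro n hn
    exact hb1.trans (hle 1 n le_rfl hn)
  have h3 : ∀ m, 1 ≤ m → 3 * b m ≤ b (m + 1) := by
    intro m hm
    rcases Nat.lt_or_ge m 3 with h | h
    · interval_cases m
      · show 3 * b 1 ≤ b 2
        omega
      · show 3 * b 2 ≤ b 3
        omega
    · rw [hrec m h]; omega
  have hgap : ∀ i m j, 1 ≤ i → i < m → 1 ≤ j → b m - b i ≠ b j := by
    intro i m j hi him hj
    have h2 : 3 * b (m - 1) ≤ b m := by
      have := h3 (m - 1) (by omega)
      rwa [Nat.sub_add_cancel (by omega)] at this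
    have h4 : b i ≤ b (m - 1) := hle i (m - 1) hi (by omega)
    have h5 := hpos (m - 1) (by omega)
    have h6 := hpos i hi
    intro hEq
    rcases le_or_gt j (m - 1) with h | h
    · have := hle j (m - 1) hj h; omega
    · have := hle m j (by omega) (by omega); omega
  -- key named quantities
  set c := b k + b (k - 1) - b (k - 2) with hc_def
  have hk21 : b (k - 2) < b (k - 1) := hstrict _ _ (by omega) (by omega)
  have hk1k : b (k - 1) < b k := hstrict _ _ (by omega) (by omega)
  have h3k : 3 * b (k - 2) ≤ b (k - 1) := by
    have := h3 (k - 2) (by omega)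
    have e : k - 2 + 1 = k - 1 := by omega
    rwa [e] at this
  have hpk2 := hpos (k - 2) (by omega)
  -- c is not in A
  have hcA : c ∉ A := by
    intro h
    have := (hAelts c h).2
    omega
  rw [subsetSums_union_singleton A c hcA]
  -- membership characterization of subsetSums A
  have hmem : ∀ x, x ∈ subsetSums (↑A : Set ℕ) ↔ (x ≤ b k + b (k - 1) ∧
      (∀ i, 1 ≤ i → i ≤ k → b i ≠ x) ∧
      (∀ i, 1 ≤ i → i ≤ k - 2 → b k + b (k - 1) - b i ≠ x)) := by
    intro x
    rw [hPA]
    simp only [Set.mem_diff, Set.mem_Icc, Set.mem_union, Set.mem_image, not_or, not_exists]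
    push_neg
    constructor
    · rintro ⟨⟨-, h1⟩, h2, h3⟩
      exact ⟨h1, fun i hi1 hi2 => h2 i ⟨hi1, hi2⟩, fun i hi1 hi2 => h3 i ⟨hi1, hi2⟩⟩
    · rintro ⟨h1, h2, h3⟩
      exact ⟨⟨Nat.zero_le _, h1⟩, fun i hi => h2 i hi.1 hi.2, fun i hi => h3 i hi.1 hi.2⟩
  ext y
  simp only [Set.mem_union, Set.mem_image, hmem, Set.mem_diff, Set.mem_Icc, not_or, not_exists]
  push_neg
  constructor
  · rintro (⟨hyN, hy1, hy2⟩ | ⟨x, ⟨hxN, hx1, hx2⟩, rfl⟩)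
    · refine ⟨⟨Nat.zero_le _, by omega⟩, ?_, ?_⟩
      · exact fun i hi => hy1 i hi.1 hi.2
      · rintro i ⟨hi1, hi2⟩
        have hbi := hle i k hi1 hi2
        omega
    · refine ⟨⟨Nat.zero_le _, by omega⟩, ?_, ?_⟩
      · rintro i ⟨hi1, hi2⟩
        have hbi := hle i k hi1 hi2
        omega
      · rintro i ⟨hi1, hi2⟩
        by_cases hic : i ≤ k - 2
        · have := hx2 i hi1 hic
          have hbi := hle i (k - 2) hi1 hic
          omega
        · have hik : i = k - 1 ∨ i = k := by omega
          have e1 := hx1 k (by omega) le_rfl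
          have e2 := hx1 (k - 1) (by omega) (by omega)
          rcases hik with rfl | rfl <;> omega
  · rintro ⟨⟨-, hyM⟩, hS1, hS2⟩
    by_cases hyN : y ≤ b k + b (k - 1)
    · by_cases hE2 : ∃ i, 1 ≤ i ∧ i ≤ k - 2 ∧ b k + b (k - 1) - b i = y
      · obtain ⟨i, hi1, hi2, hiy⟩ := hE2
        right
        have hbi := hle i (k - 2) hi1 hi2
        refine ⟨b (k - 2) - b i, ⟨by omega, ?_, ?_⟩, by omega⟩
        · intro j hj1 hj2
          rcases eq_or_lt_of_le hi2 with rfl | h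
          · have := hpos j hj1; omega
          · exact fun hEq => hgap i (k - 2) j hi1 h hj1 hEq.symm
        · intro j hj1 hj2
          have hbj := hle j (k - 2) hj1 hj2
          omega
      · left
        push_neg at hE2
        refine ⟨hyN, fun i hi1 hi2 => hS1 i ⟨hi1, hi2⟩, fun i hi1 hi2 hEq => ?_⟩
        exact hE2 i hi1 hi2 hEq
    · right
      push_neg at hyN
      refine ⟨y - c, ⟨by omega, ?_, ?_⟩, by omega⟩
      · intro j hj1 hjk hEq
        by_cases hj : j ≤ k - 2
        · have hbj := hle j (k - 2) hj1 hj
          omega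
        · have hjk' : j = k - 1 ∨ j = k := by omega
          have e1 := hS2 k ⟨by omega, le_rfl⟩
          have e2 := hS2 (k - 1) ⟨by omega, by omega⟩
          rcases hjk' with rfl | rfl <;> omega
      · intro j hj1 hj2 hEq
        have hbj := hle j (k - 2) hj1 hj2
        have := hS2 j ⟨hj1, by omega⟩
        omega
end

section
/- Let B = {b_1 < b_2 < b_3 < …} be an infinite strictly increasing sequence of integers with b_1 ≥ 11, b_2 = 3b_1 + 5, b_3 = 3b_2 + 2, and b_{n+1} = 3b_n + 4b_{n-1} for all n ≥ 3. Let k ≥ 4, and let A_k be a nonempty finite set of positive integers, each less than b_k + 2b_{k−2}, such that P(A_k) = [0, b_k + b_{k−1}] \ ({b_1, …, b_k} ∪ {b_k + b_{k−1} − b_i : i = 1, …, k−2}). Then P(A_k ∪ {b_k + b_{k−1} − b_{k−2}, b_k + 2b_{k−1} − b_{k−2}}) = [0, 3b_k + 4b_{k−1} − 2b_{k−2}] \ ({b_1, …, b_k} ∪ {3b_k + 4b_{k−1} − 2b_{k−2} − b_i : i = 1, …, k}). -/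
lemma subsetSums_union_two (A : Finset ℕ) {x y : ℕ} (hx : x ∉ A) (hy : y ∉ A) (hxy : x ≠ y) :
    subsetSums ↑(A ∪ {x, y}) =
      {n | ∃ s ∈ subsetSums (↑A : Set ℕ), n = s ∨ n = x + s ∨ n = y + s ∨ n = x + y + s} := by
  ext n
  constructor
  · rintro ⟨F, hF, rfl⟩
    have hF' : ↑((F.erase x).erase y) ⊆ (↑A : Set ℕ) := by
      intro a ha
      simp only [Finset.coe_erase, Set.mem_diff, Set.mem_singleton_iff, Finset.mem_coe] at ha
      obtain ⟨⟨haF, hax⟩, hay⟩ := ha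
      have := hF haF
      simp only [Finset.coe_union, Set.mem_union, Finset.mem_coe, Finset.coe_insert,
        Set.mem_insert_iff, Finset.coe_singleton, Set.mem_singleton_iff] at this
      rcases this with h | h | h
      · exact h
      · exact absurd h hax
      · exact absurd h hay
    refine ⟨((F.erase x).erase y).sum id, ⟨_, hF', rfl⟩, ?_⟩
    by_cases hxF : x ∈ F <;> by_cases hyF : y ∈ F
    · have h1 : ((F.erase x).erase y).sum id + y = (F.erase x).sum id :=
        Finset.sum_erase_add _ _ (Finset.mem_erase.mpr ⟨(Ne.symm hxy), hyF⟩)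
      have h2 : (F.erase x).sum id + x = F.sum id := Finset.sum_erase_add _ _ hxF
      simp only [id] at h1 h2 ⊢
      omega
    · have h2 : (F.erase x).sum id + x = F.sum id := Finset.sum_erase_add _ _ hxF
      rw [Finset.erase_eq_of_notMem (by simp [hyF])]
      simp only [id] at h2 ⊢
      omega
    · rw [Finset.erase_eq_of_notMem hxF]
      have h1 : (F.erase y).sum id + y = F.sum id := Finset.sum_erase_add _ _ hyF
      simp only [id] at h1 ⊢
      omega
    · rw [Finset.erase_eq_of_notMem hxF, Finset.erase_eq_of_notMem hyF]
      omega
  · rintro ⟨s, ⟨F, hF, rfl⟩, hc⟩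
    have hxF : x ∉ F := fun h => hx (hF h)
    have hyF : y ∉ F := fun h => hy (hF h)
    rcases hc with rfl | rfl | rfl | rfl
    · refine ⟨F, ?_, rfl⟩
      intro a ha
      simp only [Finset.coe_union, Set.mem_union]
      exact Or.inl (hF ha)
    · refine ⟨insert x F, ?_, ?_⟩
      · intro a ha
        simp only [Finset.coe_insert, Set.mem_insert_iff] at ha
        rcases ha with rfl | ha
        · simp
        · simp only [Finset.coe_union, Set.mem_union]
          exact Or.inl (hF ha)
      · rw [Finset.sum_insert hxF]; rfl
    · refine ⟨insert y F, ?_, ?_⟩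
      · intro a ha
        simp only [Finset.coe_insert, Set.mem_insert_iff] at ha
        rcases ha with rfl | ha
        · simp
        · simp only [Finset.coe_union, Set.mem_union]
          exact Or.inl (hF ha)
      · rw [Finset.sum_insert hyF]; rfl
    · refine ⟨insert x (insert y F), ?_, ?_⟩
      · intro a ha
        simp only [Finset.coe_insert, Set.mem_insert_iff] at ha
        rcases ha with rfl | rfl | ha
        · simp
        · simp
        · simp only [Finset.coe_union, Set.mem_union]
          exact Or.inl (hF ha)
      · rw [Finset.sum_insert (by simp [hxF, hxy]), Finset.sum_insert hyF]
        simp [add_assoc]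

theorem stmt_14 (b : ℕ → ℕ)
    (hbmono : ∀ n, 1 ≤ n → b n < b (n + 1))
    (hb1 : 11 ≤ b 1)
    (hb2 : b 2 = 3 * b 1 + 5)
    (hb3 : b 3 = 3 * b 2 + 2)
    (hrec : ∀ n, 3 ≤ n → b (n + 1) = 3 * b n + 4 * b (n - 1))
    (k : ℕ) (hk : 4 ≤ k)
    (A : Finset ℕ) (hAne : A.Nonempty)
    (hAelts : ∀ x ∈ A, 0 < x ∧ x < b k + 2 * b (k - 2))
    (hPA : subsetSums ↑A =
      Set.Icc 0 (b k + b (k - 1)) \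
        (b '' Set.Icc 1 k ∪
          (fun i => b k + b (k - 1) - b i) '' Set.Icc 1 (k - 2))) :
    subsetSums
        ↑(A ∪ {b k + b (k - 1) - b (k - 2), b k + 2 * b (k - 1) - b (k - 2)}) =
      Set.Icc 0 (3 * b k + 4 * b (k - 1) - 2 * b (k - 2)) \
        (b '' Set.Icc 1 k ∪
          (fun i => 3 * b k + 4 * b (k - 1) - 2 * b (k - 2) - b i) ''
            Set.Icc 1 k) := by
  -- strict monotonicity and growth facts
  have hlt : ∀ i j, 1 ≤ i → i < j → b i < b j := by
    intro i j hi hij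
    induction j with
    | zero => omega
    | succ m ih =>
      have him : i ≤ m := by omega
      rcases eq_or_lt_of_le him with rfl | h
      · exact hbmono i hi
      · exact (ih h).trans (hbmono m (by omega))
  have hle : ∀ i j, 1 ≤ i → i ≤ j → b i ≤ b j := by
    intro i j hi hij
    rcases eq_or_lt_of_le hij with rfl | h
    · exact le_rfl
    · exact (hlt i j hi h).le
  have hpos : ∀ i, 1 ≤ i → 11 ≤ b i := fun i hi => hb1.trans (hle 1 i le_rfl hi)
  have hgrow : ∀ m, 1 ≤ m → 3 * b m ≤ b (m + 1) := by
    intro m hm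
    rcases (show m = 1 ∨ m = 2 ∨ 3 ≤ m by omega) with rfl | rfl | h
    · show 3 * b 1 ≤ b 2; omega
    · show 3 * b 2 ≤ b 3; omega
    · rw [hrec m h]; omega
  have hsumlt : ∀ i j m, 1 ≤ i → 1 ≤ j → i < m → j < m → b i + b j < b m := by
    intro i j m hi hj him hjm
    have h1 : b i ≤ b (m - 1) := hle i (m - 1) hi (by omega)
    have h2 : b j ≤ b (m - 1) := hle j (m - 1) hj (by omega)
    have h3 : 3 * b (m - 1) ≤ b (m - 1 + 1) := hgrow (m - 1) (by omega)
    rw [show m - 1 + 1 = m by omega] at h3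
    have := hpos (m - 1) (by omega)
    omega
  have hbk : b k = 3 * b (k - 1) + 4 * b (k - 2) := by
    have := hrec (k - 1) (by omega)
    rw [show k - 1 + 1 = k by omega, show k - 1 - 1 = k - 2 by omega] at this
    exact this
  have hpq : 3 * b (k - 2) + 2 ≤ b (k - 1) := by
    rcases (show k = 4 ∨ 5 ≤ k by omega) with rfl | h
    · norm_num
      omega
    · have h5 := hrec (k - 2) (by omega)
      rw [show k - 2 + 1 = k - 1 by omega, show k - 2 - 1 = k - 3 by omega] at h5
      have := hpos (k - 3) (by omega)
      omega
  have hq11 : 11 ≤ b (k - 2) := hpos (k - 2) (by omega)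
  -- membership characterization of subsetSums A
  have hmemP : ∀ s : ℕ, s ∈ subsetSums (↑A : Set ℕ) ↔
      (s ≤ b k + b (k - 1) ∧ (∀ i, 1 ≤ i → i ≤ k → b i ≠ s) ∧
        (∀ i, 1 ≤ i → i ≤ k - 2 → b k + b (k - 1) - b i ≠ s)) := by
    intro s
    rw [hPA]
    simp only [Set.mem_diff, Set.mem_Icc, Set.mem_union, Set.mem_image, not_or, not_exists,
      not_and]
    constructor
    · rintro ⟨⟨-, h1⟩, h2, h3⟩
      exact ⟨h1, fun i hi hik => h2 i ⟨hi, hik⟩, fun i hi hik => h3 i ⟨hi, hik⟩⟩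
    · rintro ⟨h1, h2, h3⟩
      exact ⟨⟨Nat.zero_le _, h1⟩, fun i hi => h2 i hi.1 hi.2, fun i hi => h3 i hi.1 hi.2⟩
  -- the two new elements are not in A and distinct
  have hXA : b k + b (k - 1) - b (k - 2) ∉ A := by
    intro h
    have := (hAelts _ h).2
    omega
  have hYA : b k + 2 * b (k - 1) - b (k - 2) ∉ A := by
    intro h
    have := (hAelts _ h).2
    omega
  have hXY : b k + b (k - 1) - b (k - 2) ≠ b k + 2 * b (k - 1) - b (k - 2) := by omega
  rw [subsetSums_union_two A hXA hYA hXY]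
  -- auxiliary membership facts
  have hzeroP : (0 : ℕ) ∈ subsetSums (↑A : Set ℕ) := ⟨∅, by simp, rfl⟩
  have hqP : ∀ i, 1 ≤ i → i ≤ k - 2 → (b (k - 2) - b i) ∈ subsetSums (↑A : Set ℕ) := by
    intro i hi1 hik2
    have hbi : b i ≤ b (k - 2) := hle i (k - 2) hi1 hik2
    have hi11 := hpos i hi1
    rw [hmemP]
    refine ⟨by omega, ?_, ?_⟩
    · intro j hj1 hjk heq
      have hj11 := hpos j hj1
      rcases (show i = k - 2 ∨ i < k - 2 by omega) with h | h
      · subst h; omega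
      · rcases le_or_gt (k - 2) j with hj | hj
        · have := hle (k - 2) j (by omega) hj; omega
        · have := hsumlt j i (k - 2) hj1 hi1 hj h; omega
    · intro j hj1 hjk heq
      have := hle j (k - 2) hj1 hjk
      have := hpos j hj1
      omega
  ext n
  simp only [Set.mem_setOf_eq, Set.mem_diff, Set.mem_Icc, Set.mem_union, Set.mem_image,
    not_or, not_exists, not_and]
  constructor
  · rintro ⟨s, hs, hcase⟩
    rw [hmemP] at hs
    obtain ⟨hsle, hlow, hhigh⟩ := hs
    refine ⟨⟨Nat.zero_le _, ?_⟩, ?_, ?_⟩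
    · rcases hcase with rfl | rfl | rfl | rfl <;> omega
    · intro i hi heq
      have hbik := hle i k hi.1 hi.2
      rcases hcase with rfl | rfl | rfl | rfl
      · exact hlow i hi.1 hi.2 heq
      · omega
      · omega
      · omega
    · intro i hi heq
      have hbik := hle i k hi.1 hi.2
      have hbi11 := hpos i hi.1
      rcases hcase with rfl | rfl | rfl | rfl
      · omega
      · omega
      · omega
      · rcases (show i ≤ k - 2 ∨ i = k - 1 ∨ i = k by omega) with h | h | h
        · have := hhigh i hi.1 h; omega
        · rw [h] at heq; have := hlow k (by omega) le_rfl; omega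
        · rw [h] at heq; have := hlow (k - 1) (by omega) (by omega); omega
  · rintro ⟨⟨-, hn⟩, hlowg, hhighg⟩
    rcases (show n ≤ b k + b (k - 1) ∨
        (b k + b (k - 1) < n ∧ n ≤ 2 * b k + 2 * b (k - 1) - b (k - 2)) ∨
        (2 * b k + 2 * b (k - 1) - b (k - 2) < n ∧ n ≤ 2 * b k + 3 * b (k - 1) - b (k - 2)) ∨
        (2 * b k + 3 * b (k - 1) - b (k - 2) < n) by omega) with
      h1 | ⟨h1, h2⟩ | ⟨h1, h2⟩ | h1
    · -- low range : use P(A) or X + (q - b i)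
      by_cases hH : ∃ i, 1 ≤ i ∧ i ≤ k - 2 ∧ b k + b (k - 1) - b i = n
      · obtain ⟨i, hi1, hik2, hieq⟩ := hH
        have hbi := hle i (k - 2) hi1 hik2
        exact ⟨b (k - 2) - b i, hqP i hi1 hik2, Or.inr (Or.inl (by omega))⟩
      · push_neg at hH
        exact ⟨n, (hmemP n).mpr ⟨h1, fun i hi hik => hlowg i ⟨hi, hik⟩, hH⟩, Or.inl rfl⟩
    · -- second range
      by_cases hB : ∃ j, 1 ≤ j ∧ j ≤ k ∧ b j = n - (b k + b (k - 1) - b (k - 2))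
      · obtain ⟨j, hj1, hjk, hjeq⟩ := hB
        have hj' : j = k - 1 ∨ j = k := by
          by_contra hcon
          push_neg at hcon
          have hjk2 : j ≤ k - 2 := by omega
          have := hle j (k - 2) hj1 hjk2
          omega
        rcases hj' with h | h
        · rw [h] at hjeq
          exact ⟨0, hzeroP, Or.inr (Or.inr (Or.inl (by omega)))⟩
        rw [h] at hjeq
        refine ⟨n - (b k + 2 * b (k - 1) - b (k - 2)),
            (hmemP _).mpr ⟨by omega, ?_, ?_⟩, Or.inr (Or.inr (Or.inl (by omega)))⟩
        · intro j' hj'1 hj'k heq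
          rcases (show j' ≤ k - 1 ∨ j' = k by omega) with h' | h'
          · have := hle j' (k - 1) hj'1 h'; omega
          · rw [h'] at heq; omega
        · intro i hi1 hik heq
          have := hle i (k - 2) hi1 hik
          have := hpos i hi1
          omega
      · by_cases hB2 : ∃ i, 1 ≤ i ∧ i ≤ k - 2 ∧
            b k + b (k - 1) - b i = n - (b k + b (k - 1) - b (k - 2))
        · obtain ⟨i, hi1, hik2, hieq⟩ := hB2
          have hbi := hle i (k - 2) hi1 hik2
          have hbi11 := hpos i hi1
          refine ⟨n - (b k + 2 * b (k - 1) - b (k - 2)),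
            (hmemP _).mpr ⟨by omega, ?_, ?_⟩, Or.inr (Or.inr (Or.inl (by omega)))⟩
          · intro j hj1 hjk heq
            rcases (show j ≤ k - 1 ∨ j = k by omega) with h | h
            · have := hle j (k - 1) hj1 h; omega
            · rw [h] at heq; omega
          · intro j hj1 hjk heq
            have := hle j (k - 2) hj1 hjk
            omega
        · push_neg at hB hB2
          exact ⟨n - (b k + b (k - 1) - b (k - 2)),
            (hmemP _).mpr ⟨by omega, hB, hB2⟩, Or.inr (Or.inl (by omega))⟩
    · -- third range
      by_cases hB : ∃ i, 1 ≤ i ∧ i ≤ k - 2 ∧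
          b k + b (k - 1) - b i = n - (b k + 2 * b (k - 1) - b (k - 2))
      · obtain ⟨i, hi1, hik2, hieq⟩ := hB
        have hbi := hle i (k - 2) hi1 hik2
        exact ⟨b (k - 2) - b i, hqP i hi1 hik2, Or.inr (Or.inr (Or.inr (by omega)))⟩
      · push_neg at hB
        refine ⟨n - (b k + 2 * b (k - 1) - b (k - 2)),
          (hmemP _).mpr ⟨by omega, ?_, hB⟩, Or.inr (Or.inr (Or.inl (by omega)))⟩
        intro j hj1 hjk heq
        have := hle j k hj1 hjk
        omega
    · -- top range
      refine ⟨n - (2 * b k + 3 * b (k - 1) - 2 * b (k - 2)),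
        (hmemP _).mpr ⟨by omega, ?_, ?_⟩, Or.inr (Or.inr (Or.inr (by omega)))⟩
      · intro j hj1 hjk heq
        rcases (show j ≤ k - 2 ∨ j = k - 1 ∨ j = k by omega) with h | h | h
        · have := hle j (k - 2) hj1 h; omega
        · rw [h] at heq; have := hhighg k ⟨by omega, le_rfl⟩; omega
        · rw [h] at heq; have := hhighg (k - 1) ⟨by omega, by omega⟩; omega
      · intro i hi1 hik heq
        have hbi := hle i (k - 2) hi1 hik
        have := hhighg i ⟨hi1, by omega⟩
        omega
end

section
/- Let b_1 and d be positive integers with b_1 ∈ {4, 7, 8} or b_1 ≥ 11, and b_1 + 2 ≤ d ≤ 2b_1 + 1, and set b_i = b_1 + (i−1)d for i ≥ 1. Then there exists a sequence of finite sets of positive integers A_2 ⊆ A_3 ⊆ A_4 ⊆ … such that for every k ≥ 2, P(A_k) = [0, 2b_1 + (2^k − 1)d] \ {b_i : i = 1, …, 2^k}. -/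
lemma subsetSums_empty : subsetSums (↑(∅ : Finset ℕ)) = Set.Icc 0 0 := by
  ext n
  constructor
  · rintro ⟨F, hF, rfl⟩
    have : F = ∅ := by
      apply Finset.eq_empty_of_forall_notMem
      intro x hx
      simpa using hF hx
    simp [this]
  · intro hn
    have : n = 0 := by simpa using hn
    exact ⟨∅, by simp, by simp [this]⟩

lemma subsetSums_insert {a : ℕ} {A : Finset ℕ} (ha : a ∉ A) :
    subsetSums ↑(insert a A) = subsetSums ↑A ∪ (fun s => a + s) '' subsetSums ↑A := by
  ext n
  constructor
  · rintro ⟨F, hF, rfl⟩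
    by_cases haF : a ∈ F
    · right
      refine ⟨(F.erase a).sum id, ⟨F.erase a, ?_, rfl⟩, ?_⟩
      · intro x hx
        have hx' : x ∈ F.erase a := by exact_mod_cast hx
        have h1 := Finset.mem_erase.1 hx'
        have h2 : (x : ℕ) ∈ (↑(insert a A) : Set ℕ) := hF (by exact_mod_cast h1.2)
        simp only [Finset.coe_insert, Set.mem_insert_iff, Finset.mem_coe] at h2
        rcases h2 with rfl | h2
        · exact absurd rfl h1.1
        · exact h2
      · exact Finset.add_sum_erase F id haF
    · left
      refine ⟨F, ?_, rfl⟩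
      intro x hx
      have hx' : x ∈ F := by exact_mod_cast hx
      have h2 : (x : ℕ) ∈ (↑(insert a A) : Set ℕ) := hF hx
      simp only [Finset.coe_insert, Set.mem_insert_iff, Finset.mem_coe] at h2
      rcases h2 with rfl | h2
      · exact absurd hx' haF
      · exact h2
  · rintro (⟨F, hF, rfl⟩ | ⟨s, ⟨F, hF, rfl⟩, rfl⟩)
    · refine ⟨F, ?_, rfl⟩
      refine hF.trans ?_
      simp only [Finset.coe_insert]
      exact Set.subset_insert _ _
    · have haF : a ∉ F := by
        intro h
        exact ha (by exact_mod_cast hF (by exact_mod_cast h))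
      refine ⟨insert a F, ?_, ?_⟩
      · simp only [Finset.coe_insert]
        exact Set.insert_subset_insert hF
      · rw [Finset.sum_insert haF]
        rfl

lemma fill (C : Finset ℕ) (m a : ℕ) (hC : subsetSums ↑C = Set.Icc 0 m)
    (ha : a ∉ C) (h1 : 0 < a) (h2 : a ≤ m + 1) :
    subsetSums ↑(insert a C) = Set.Icc 0 (m + a) := by
  rw [subsetSums_insert ha, hC]
  ext x
  simp only [Set.mem_union, Set.mem_Icc, Set.mem_image]
  constructor
  · rintro (⟨h3, h4⟩ | ⟨s, ⟨hs1, hs2⟩, rfl⟩) <;> omega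
  · rintro ⟨h3, h4⟩
    by_cases hx : x ≤ m
    · left; omega
    · right; exact ⟨x - a, by omega, by omega⟩

lemma exists_C : ∀ n, (n = 3 ∨ n = 6 ∨ n = 7 ∨ 10 ≤ n) →
    ∃ C : Finset ℕ, (∀ x ∈ C, 0 < x ∧ x < n) ∧ subsetSums ↑C = Set.Icc 0 n := by
  intro n
  induction n using Nat.strong_induction_on with
  | _ n ih =>
    intro hn
    have e1 : subsetSums ↑({1} : Finset ℕ) = Set.Icc 0 1 := by
      have := fill ∅ 0 1 subsetSums_empty (by simp) (by norm_num) (by norm_num)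
      simpa using this
    have e2 : subsetSums ↑(insert 2 {1} : Finset ℕ) = Set.Icc 0 3 :=
      fill {1} 1 2 e1 (by decide) (by norm_num) (by norm_num)
    have e3 : subsetSums ↑(insert 3 (insert 2 {1}) : Finset ℕ) = Set.Icc 0 6 :=
      fill _ 3 3 e2 (by decide) (by norm_num) (by norm_num)
    have e4 : subsetSums ↑(insert 4 (insert 2 {1}) : Finset ℕ) = Set.Icc 0 7 :=
      fill _ 3 4 e2 (by decide) (by norm_num) (by norm_num)
    have e5 : subsetSums ↑(insert 4 (insert 3 (insert 2 {1})) : Finset ℕ) = Set.Icc 0 10 :=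
      fill _ 6 4 e3 (by decide) (by norm_num) (by norm_num)
    by_cases h20 : n < 20
    · have hcases : n = 3 ∨ n = 6 ∨ n = 7 ∨ n = 10 ∨ n = 11 ∨ n = 12 ∨ n = 13 ∨ n = 14 ∨
          n = 15 ∨ n = 16 ∨ n = 17 ∨ n = 18 ∨ n = 19 := by omega
      rcases hcases with rfl | rfl | rfl | rfl | rfl | rfl | rfl | rfl | rfl | rfl | rfl | rfl | rfl
      · exact ⟨insert 2 {1}, by decide, e2⟩
      · exact ⟨insert 3 (insert 2 {1}), by decide, e3⟩
      · exact ⟨insert 4 (insert 2 {1}), by decide, e4⟩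
      · exact ⟨insert 4 (insert 3 (insert 2 {1})), by decide, e5⟩
      · exact ⟨insert 5 (insert 3 (insert 2 {1})), by decide,
          fill _ 6 5 e3 (by decide) (by norm_num) (by norm_num)⟩
      · exact ⟨insert 6 (insert 3 (insert 2 {1})), by decide,
          fill _ 6 6 e3 (by decide) (by norm_num) (by norm_num)⟩
      · exact ⟨insert 7 (insert 3 (insert 2 {1})), by decide,
          fill _ 6 7 e3 (by decide) (by norm_num) (by norm_num)⟩
      · exact ⟨insert 7 (insert 4 (insert 2 {1})), by decide,
          fill _ 7 7 e4 (by decide) (by norm_num) (by norm_num)⟩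
      · exact ⟨insert 5 (insert 4 (insert 3 (insert 2 {1}))), by decide,
          fill _ 10 5 e5 (by decide) (by norm_num) (by norm_num)⟩
      · exact ⟨insert 6 (insert 4 (insert 3 (insert 2 {1}))), by decide,
          fill _ 10 6 e5 (by decide) (by norm_num) (by norm_num)⟩
      · exact ⟨insert 7 (insert 4 (insert 3 (insert 2 {1}))), by decide,
          fill _ 10 7 e5 (by decide) (by norm_num) (by norm_num)⟩
      · exact ⟨insert 8 (insert 4 (insert 3 (insert 2 {1}))), by decide,
          fill _ 10 8 e5 (by decide) (by norm_num) (by norm_num)⟩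
      · exact ⟨insert 9 (insert 4 (insert 3 (insert 2 {1}))), by decide,
          fill _ 10 9 e5 (by decide) (by norm_num) (by norm_num)⟩
    · push_neg at h20
      obtain ⟨C, hCel, hCs⟩ := ih (n / 2) (by omega) (Or.inr (Or.inr (Or.inr (by omega))))
      have hanotin : (n - n / 2) ∉ C := by
        intro h
        have := (hCel _ h).2
        omega
      refine ⟨insert (n - n / 2) C, ?_, ?_⟩
      · intro x hx
        rcases Finset.mem_insert.1 hx with rfl | hx
        · omega
        · have := hCel x hx; omega
      · have h := fill C (n / 2) (n - n / 2) hCs hanotin (by omega) (by omega)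
        have hn2 : n / 2 + (n - n / 2) = n := by omega
        rw [hn2] at h
        exact h

lemma main_step (b1 d m : ℕ) (hb1 : 0 < b1) (hd1 : b1 + 2 ≤ d) (hd2 : d ≤ 2 * b1 + 1) :
    (Set.Icc 0 (2 * b1 + m * d) \ {y | ∃ j, j < m + 1 ∧ y = b1 + j * d}) ∪
      (fun s => (m + 1) * d + s) ''
        (Set.Icc 0 (2 * b1 + m * d) \ {y | ∃ j, j < m + 1 ∧ y = b1 + j * d}) =
    Set.Icc 0 (2 * b1 + (2 * m + 1) * d) \ {y | ∃ j, j < 2 * m + 2 ∧ y = b1 + j * d} := by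
  have hmd : m * d + d = (m + 1) * d := by ring
  have hmd2 : (2 * m + 1) * d = m * d + (m + 1) * d := by ring
  ext x
  simp only [Set.mem_union, Set.mem_diff, Set.mem_Icc, Set.mem_image, Set.mem_setOf_eq]
  constructor
  · rintro (⟨⟨-, hx⟩, hhole⟩ | ⟨s, ⟨⟨-, hs⟩, hshole⟩, rfl⟩)
    · refine ⟨⟨Nat.zero_le _, ?_⟩, ?_⟩
      · have : m * d ≤ (2 * m + 1) * d := Nat.mul_le_mul_right d (by omega)
        linarith
      · rintro ⟨j, hj, rfl⟩
        by_cases hjm : j < m + 1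
        · exact hhole ⟨j, hjm, rfl⟩
        · have h1 : (m + 1) * d ≤ j * d := Nat.mul_le_mul_right d (by omega)
          linarith
    · refine ⟨⟨Nat.zero_le _, by linarith⟩, ?_⟩
      rintro ⟨j, hj, heq⟩
      by_cases hjm : j < m + 1
      · have h1 : j * d ≤ m * d := Nat.mul_le_mul_right d (by omega)
        linarith
      · have ht : j = (j - (m + 1)) + (m + 1) := by omega
        have hjd : j * d = (j - (m + 1)) * d + (m + 1) * d := by
          rw [← Nat.add_mul, ← ht]
        exact hshole ⟨j - (m + 1), by omega, by linarith⟩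
  · rintro ⟨⟨-, hx⟩, hhole⟩
    by_cases hxM : x ≤ 2 * b1 + m * d
    · left
      exact ⟨⟨Nat.zero_le _, hxM⟩, fun ⟨j, hj, he⟩ => hhole ⟨j, by omega, he⟩⟩
    · right
      push_neg at hxM
      have hge : (m + 1) * d ≤ x := by linarith
      refine ⟨x - (m + 1) * d, ⟨⟨Nat.zero_le _, ?_⟩, ?_⟩, ?_⟩
      · have : x - (m + 1) * d + (m + 1) * d = x := Nat.sub_add_cancel hge
        linarith
      · rintro ⟨j, hj, he⟩
        have hx' : x = b1 + (j + (m + 1)) * d := by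
          have h1 : (j + (m + 1)) * d = j * d + (m + 1) * d := by ring
          have h2 : x - (m + 1) * d + (m + 1) * d = x := Nat.sub_add_cancel hge
          linarith
        exact hhole ⟨j + (m + 1), by omega, hx'⟩
      · exact Nat.add_sub_cancel' hge

theorem stmt_15 (b1 d : ℕ)
    (hb1pos : 0 < b1) (hdpos : 0 < d)
    (hb1 : b1 = 4 ∨ b1 = 7 ∨ b1 = 8 ∨ 11 ≤ b1)
    (hd1 : b1 + 2 ≤ d) (hd2 : d ≤ 2 * b1 + 1) :
    ∃ A : ℕ → Finset ℕ,
      (∀ k, 2 ≤ k → A k ⊆ A (k + 1)) ∧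
      (∀ k, 2 ≤ k → ∀ x ∈ A k, 0 < x) ∧
      (∀ k, 2 ≤ k →
        subsetSums ↑(A k) =
          Set.Icc 0 (2 * b1 + (2 ^ k - 1) * d) \
            ((fun i => b1 + (i - 1) * d) '' Set.Icc 1 (2 ^ k))) := by
  obtain ⟨C, hCel, hCs⟩ := exists_C (b1 - 1) (by omega)
  set A : ℕ → Finset ℕ :=
    fun k => insert (b1 + 1) C ∪ (Finset.range k).image (fun j => 2 ^ j * d) with hA
  have hAsucc : ∀ k, A (k + 1) = insert (2 ^ k * d) (A k) := by
    intro k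
    simp only [hA, Finset.range_add_one, Finset.image_insert, Finset.union_insert]
  have hbound : ∀ k x, x ∈ A k → x < 2 ^ k * d := by
    intro k x hx
    have h1 : (1 : ℕ) ≤ 2 ^ k := Nat.one_le_two_pow
    have h2 : d ≤ 2 ^ k * d := Nat.le_mul_of_pos_left d (by positivity)
    rcases Finset.mem_union.1 hx with h | h
    · rcases Finset.mem_insert.1 h with rfl | h
      · omega
      · have h3 := (hCel x h).2
        omega
    · obtain ⟨j, hj, rfl⟩ := Finset.mem_image.1 h
      have h4 : (2 : ℕ) ^ j < 2 ^ k := Nat.pow_lt_pow_right one_lt_two (Finset.mem_range.1 hj)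
      exact Nat.mul_lt_mul_of_lt_of_le h4 (le_refl d) hdpos
  have key : ∀ k, subsetSums ↑(A k) =
      Set.Icc 0 (2 * b1 + (2 ^ k - 1) * d) \ {y | ∃ j, j < 2 ^ k ∧ y = b1 + j * d} := by
    intro k
    induction k with
    | zero =>
      have hA0 : A 0 = insert (b1 + 1) C := by
        simp [hA]
      have hnotin : (b1 + 1) ∉ C := by
        intro h
        have := (hCel _ h).2
        omega
      rw [hA0, subsetSums_insert hnotin, hCs]
      ext x
      simp only [pow_zero, Set.mem_union, Set.mem_Icc, Set.mem_image, Set.mem_diff,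
        Set.mem_setOf_eq, Nat.lt_one_iff, exists_eq_left, zero_mul, add_zero,
        Nat.sub_self]
      constructor
      · rintro (⟨h3, h4⟩ | ⟨s, ⟨hs1, hs2⟩, rfl⟩) <;> constructor <;> omega
      · rintro ⟨⟨h3, h4⟩, h5⟩
        by_cases hx : x ≤ b1 - 1
        · left; omega
        · right; exact ⟨x - (b1 + 1), by omega, by omega⟩
    | succ k ih =>
      have hnotin : 2 ^ k * d ∉ A k := fun h => lt_irrefl _ (hbound k _ h)
      rw [hAsucc k, subsetSums_insert hnotin, ih]
      obtain ⟨m, hm⟩ : ∃ m, 2 ^ k = m + 1 :=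
        ⟨2 ^ k - 1, by have := Nat.one_le_two_pow (n := k); omega⟩
      have h1 : (2 : ℕ) ^ (k + 1) = 2 * m + 2 := by rw [pow_succ, hm]; ring
      have h2 : (2 : ℕ) ^ (k + 1) - 1 = 2 * m + 1 := by omega
      rw [h2, h1, hm]
      simp only [Nat.add_sub_cancel]
      exact main_step b1 d m hb1pos hd1 hd2
  refine ⟨A, ?_, ?_, ?_⟩
  · intro k _
    exact Finset.union_subset_union (le_refl _)
      (Finset.image_subset_image (Finset.range_subset_range.mpr (Nat.le_succ k)))
  · intro k _ x hx
    rcases Finset.mem_union.1 hx with h | h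
    · rcases Finset.mem_insert.1 h with rfl | h
      · omega
      · exact (hCel x h).1
    · obtain ⟨j, _, rfl⟩ := Finset.mem_image.1 h
      positivity
  · intro k _
    rw [key k]
    have himg : ((fun i => b1 + (i - 1) * d) '' Set.Icc 1 (2 ^ k)) =
        {y | ∃ j, j < 2 ^ k ∧ y = b1 + j * d} := by
      ext y
      simp only [Set.mem_image, Set.mem_Icc, Set.mem_setOf_eq]
      constructor
      · rintro ⟨i, ⟨hi1, hi2⟩, rfl⟩
        exact ⟨i - 1, by omega, rfl⟩
      · rintro ⟨j, hj, rfl⟩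
        exact ⟨j + 1, ⟨by omega, by omega⟩, by simp⟩
    rw [himg]
end

section
/- Let b_1 and d be positive integers with b_1 ≥ 4 and b_1 + 2 ≤ d ≤ 2b_1 + 1. Let A_1 be a finite set of positive integers contained in [1, b_1 − 1] with P(A_1) = [0, b_1 − 1]. Then P(A_1 ∪ {b_1 + 1, d, 2d}) = [0, 2b_1 + 3d] \ {b_1, b_1 + d, b_1 + 2d, b_1 + 3d}. -/
theorem stmt_16 (b1 d : ℕ)
    (hb1 : 4 ≤ b1) (hdpos : 0 < d)
    (hd1 : b1 + 2 ≤ d) (hd2 : d ≤ 2 * b1 + 1)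
    (A1 : Finset ℕ)
    (hA1sub : ↑A1 ⊆ Set.Icc 1 (b1 - 1))
    (hA1 : subsetSums ↑A1 = Set.Icc 0 (b1 - 1)) :
    subsetSums ↑(A1 ∪ {b1 + 1, d, 2 * d}) =
      Set.Icc 0 (2 * b1 + 3 * d) \
        {b1, b1 + d, b1 + 2 * d, b1 + 3 * d} := by
  have hne1 : b1 + 1 ≠ d := by omega
  have hne2 : b1 + 1 ≠ 2 * d := by omega
  have hne3 : d ≠ 2 * d := by omega
  have hA1bdd : ∀ x ∈ A1, 1 ≤ x ∧ x ≤ b1 - 1 := by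
    intro x hx
    have := hA1sub hx
    exact ⟨this.1, this.2⟩
  ext n
  simp only [Set.mem_diff, Set.mem_Icc, Set.mem_insert_iff, Set.mem_singleton_iff]
  constructor
  · rintro ⟨F, hF, rfl⟩
    have hsplit : F = (F \ A1) ∪ (F ∩ A1) := (Finset.sdiff_union_inter F A1).symm
    have hdisj : Disjoint (F \ A1) (F ∩ A1) := Finset.disjoint_sdiff_inter F A1
    have hsum : F.sum id = (F \ A1).sum id + (F ∩ A1).sum id := by
      conv_lhs => rw [hsplit]
      exact Finset.sum_union hdisj
    set G := F \ A1 with hGdef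
    set s := (F ∩ A1).sum id with hsdef
    have hsmem : s ∈ subsetSums ↑A1 := by
      refine ⟨F ∩ A1, ?_, rfl⟩
      intro x hx
      simp only [Finset.coe_inter, Set.mem_inter_iff, Finset.mem_coe] at hx
      exact hx.2
    rw [hA1] at hsmem
    have hsle : s ≤ b1 - 1 := hsmem.2
    have hGsub : G ⊆ ({b1 + 1, d, 2 * d} : Finset ℕ) := by
      intro x hx
      rw [hGdef, Finset.mem_sdiff] at hx
      have := hF hx.1
      simp only [Finset.coe_union, Set.mem_union, Finset.mem_coe] at this
      rcases this with h | h
      · exact absurd h hx.2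
      · exact h
    have hGeq : G = ({b1 + 1, d, 2 * d} : Finset ℕ).filter (· ∈ G) := by
      rw [Finset.filter_mem_eq_inter, Finset.inter_eq_right.mpr hGsub]
    have hkey : G.sum id = (if b1 + 1 ∈ G then b1 + 1 else 0) +
        ((if d ∈ G then d else 0) + (if 2 * d ∈ G then 2 * d else 0)) := by
      conv_lhs => rw [hGeq]
      rw [Finset.sum_filter]
      rw [Finset.sum_insert (by simp [hne1, hne2]),
        Finset.sum_insert (by simp [hne3]), Finset.sum_singleton]; rfl
    have hn : F.sum id = G.sum id + s := hsum
    by_cases h1 : b1 + 1 ∈ G <;> by_cases h2 : d ∈ G <;> by_cases h3 : 2 * d ∈ G <;>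
      simp only [h1, h2, h3, if_true, if_false] at hkey <;> omega
  · rintro ⟨⟨-, hn⟩, hnot⟩
    push_neg at hnot
    obtain ⟨hn1, hn2, hn3, hn4⟩ := hnot
    have main : ∀ t : ℕ, ∀ G : Finset ℕ,
        G ⊆ ({b1 + 1, d, 2 * d} : Finset ℕ) → G.sum id = t →
        t ≤ n → n ≤ t + (b1 - 1) →
        n ∈ subsetSums ↑(A1 ∪ {b1 + 1, d, 2 * d}) := by
      intro t G hG hGsum ht1 ht2
      have hs : n - t ∈ subsetSums ↑A1 := by
        rw [hA1]
        simp only [Set.mem_Icc]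
        omega
      obtain ⟨F1, hF1, hF1sum⟩ := hs
      have hdisj : Disjoint F1 G := by
        rw [Finset.disjoint_left]
        intro x hx hxG
        have h1 : x ∈ (↑A1 : Set ℕ) := hF1 hx
        have h2 := hA1bdd x h1
        have h3 := hG hxG
        simp only [Finset.mem_insert, Finset.mem_singleton] at h3
        omega
      refine ⟨F1 ∪ G, ?_, ?_⟩
      · simp only [Finset.coe_union]
        exact Set.union_subset_union hF1 (by exact_mod_cast hG)
      · rw [Finset.sum_union hdisj, hF1sum, hGsum]
        omega
    have hcases : (n ≤ b1 - 1) ∨ (b1 + 1 ≤ n ∧ n ≤ 2 * b1) ∨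
        (d ≤ n ∧ n ≤ d + (b1 - 1)) ∨ (b1 + 1 + d ≤ n ∧ n ≤ 2 * b1 + d) ∨
        (2 * d ≤ n ∧ n ≤ 2 * d + (b1 - 1)) ∨
        (b1 + 1 + 2 * d ≤ n ∧ n ≤ 2 * b1 + 2 * d) ∨
        (3 * d ≤ n ∧ n ≤ 3 * d + (b1 - 1)) ∨
        (b1 + 1 + 3 * d ≤ n ∧ n ≤ 2 * b1 + 3 * d) := by omega
    rcases hcases with h | h | h | h | h | h | h | h
    · exact main 0 ∅ (by simp) (by simp) (by omega) (by omega)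
    · exact main (b1 + 1) {b1 + 1} (by simp) (by simp) h.1 (by omega)
    · exact main d {d} (by simp) (by simp) h.1 (by omega)
    · exact main (b1 + 1 + d) {b1 + 1, d} (by intro x hx; simp at hx ⊢; tauto)
        (by rw [Finset.sum_pair hne1]; rfl) h.1 (by omega)
    · exact main (2 * d) {2 * d} (by simp) (by simp) h.1 (by omega)
    · exact main (b1 + 1 + 2 * d) {b1 + 1, 2 * d} (by intro x hx; simp at hx ⊢; tauto)
        (by rw [Finset.sum_pair hne2]; rfl) h.1 (by omega)
    · exact main (3 * d) {d, 2 * d} (by intro x hx; simp at hx ⊢; tauto)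
        (by rw [Finset.sum_pair hne3]; simp; omega) h.1 (by omega)
    · exact main (b1 + 1 + 3 * d) {b1 + 1, d, 2 * d} (by simp)
        (by rw [Finset.sum_insert (by simp [hne1, hne2]), Finset.sum_pair hne3]; simp; omega)
        h.1 (by omega)
end

section
/- Let b_1 and d be positive integers with b_1 ≥ 4 and b_1 + 2 ≤ d ≤ 2b_1 + 1, and let k ≥ 2. Let A_k be a nonempty finite set of positive integers, each less than 2^k·d, such that P(A_k) = [0, 2b_1 + (2^k − 1)d] \ {b_1 + (i−1)d : i = 1, …, 2^k}. Then P(A_k ∪ {2^k·d}) = [0, 2b_1 + (2^{k+1} − 1)d] \ {b_1 + (i−1)d : i = 1, …, 2^{k+1}}. -/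
lemma subsetSums_union_singleton_s17 (A : Finset ℕ) (N : ℕ) (hN : N ∉ A) (n : ℕ) :
    n ∈ subsetSums ↑(A ∪ {N}) ↔
      n ∈ subsetSums (↑A : Set ℕ) ∨ ∃ m ∈ subsetSums (↑A : Set ℕ), n = N + m := by
  constructor
  · rintro ⟨F, hF, rfl⟩
    by_cases hNF : N ∈ F
    · right
      refine ⟨(F.erase N).sum id, ⟨F.erase N, ?_, rfl⟩, ?_⟩
      · intro x hx
        simp only [Finset.coe_erase, Set.mem_diff, Set.mem_singleton_iff,
          Finset.mem_coe] at hx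
        have := hF hx.1
        simp only [Finset.coe_union, Set.mem_union, Finset.coe_singleton,
          Set.mem_singleton_iff, Finset.mem_coe] at this ⊢
        tauto
      · exact (Finset.add_sum_erase F id hNF).symm
    · left
      refine ⟨F, ?_, rfl⟩
      intro x hx
      have := hF hx
      simp only [Finset.coe_union, Set.mem_union, Finset.coe_singleton,
        Set.mem_singleton_iff] at this
      rcases this with h | h
      · exact h
      · exact absurd (by simpa [h] using hx) hNF
  · rintro (⟨F, hF, rfl⟩ | ⟨m, ⟨F, hF, rfl⟩, rfl⟩)
    · exact ⟨F, hF.trans (by simp), rfl⟩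
    · have hNF : N ∉ F := fun h => hN (hF h)
      refine ⟨insert N F, ?_, ?_⟩
      · intro x hx
        simp only [Finset.coe_insert, Set.mem_insert_iff, Finset.mem_coe] at hx
        simp only [Finset.coe_union, Set.mem_union, Finset.coe_singleton,
          Set.mem_singleton_iff]
        rcases hx with h | h
        · exact Or.inr h
        · exact Or.inl (hF h)
      · simp [Finset.sum_insert hNF]

theorem stmt_17 (b1 d k : ℕ)
    (hb1 : 4 ≤ b1) (hdpos : 0 < d)
    (hd1 : b1 + 2 ≤ d) (hd2 : d ≤ 2 * b1 + 1)
    (hk : 2 ≤ k)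
    (A : Finset ℕ) (hAne : A.Nonempty)
    (hAelts : ∀ x ∈ A, 0 < x ∧ x < 2 ^ k * d)
    (hPA : subsetSums ↑A =
      Set.Icc 0 (2 * b1 + (2 ^ k - 1) * d) \
        ((fun i => b1 + (i - 1) * d) '' Set.Icc 1 (2 ^ k))) :
    subsetSums ↑(A ∪ {2 ^ k * d}) =
      Set.Icc 0 (2 * b1 + (2 ^ (k + 1) - 1) * d) \
        ((fun i => b1 + (i - 1) * d) '' Set.Icc 1 (2 ^ (k + 1))) := by
  set N := 2 ^ k * d with hNdef
  set Bk := (fun i => b1 + (i - 1) * d) '' Set.Icc 1 (2 ^ k) with hBk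
  have p1 : 1 ≤ 2 ^ k := Nat.one_le_two_pow
  have hNA : N ∉ A := fun h => absurd (hAelts _ h).2 (lt_irrefl _)
  have key : N = (2 ^ k - 1) * d + d := by
    have h : 2 ^ k = (2 ^ k - 1) + 1 := by omega
    rw [hNdef]
    conv_lhs => rw [h]
    rw [Nat.add_mul, one_mul]
  have key2 : (2 ^ (k + 1) - 1) * d = (2 ^ k - 1) * d + N := by
    have h : 2 ^ (k + 1) - 1 = (2 ^ k - 1) + 2 ^ k := by
      rw [pow_succ]; omega
    rw [h, Nat.add_mul, hNdef]
  have memBk : ∀ x ∈ Bk, b1 ≤ x ∧ x < N := by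
    rintro x ⟨i, ⟨hi1, hi2⟩, rfl⟩
    refine ⟨Nat.le_add_right _ _, ?_⟩
    have h1 : (i - 1) * d ≤ (2 ^ k - 1) * d := Nat.mul_le_mul_right d (by omega)
    have h2 : b1 < d := by omega
    linarith [key]
  have Bsplit : ∀ x, x ∈ (fun i => b1 + (i - 1) * d) '' Set.Icc 1 (2 ^ (k + 1)) ↔
      x ∈ Bk ∨ ∃ y ∈ Bk, x = N + y := by
    intro x
    constructor
    · rintro ⟨i, ⟨hi1, hi2⟩, rfl⟩
      rw [pow_succ] at hi2
      by_cases hle : i ≤ 2 ^ k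
      · exact Or.inl ⟨i, ⟨hi1, hle⟩, rfl⟩
      · right
        refine ⟨b1 + (i - 2 ^ k - 1) * d, ⟨i - 2 ^ k, ⟨by omega, by omega⟩, rfl⟩, ?_⟩
        simp only
        rw [show i - 1 = 2 ^ k + (i - 2 ^ k - 1) from by omega, Nat.add_mul, hNdef]
        ring
    · rintro (⟨i, ⟨hi1, hi2⟩, rfl⟩ | ⟨y, ⟨i, ⟨hi1, hi2⟩, rfl⟩, rfl⟩)
      · exact ⟨i, ⟨hi1, by rw [pow_succ]; omega⟩, rfl⟩
      · refine ⟨i + 2 ^ k, ⟨by omega, by rw [pow_succ]; omega⟩, ?_⟩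
        simp only
        rw [show i + 2 ^ k - 1 = 2 ^ k + (i - 1) from by omega, Nat.add_mul, hNdef]
        ring
  have hmem : ∀ n, n ∈ subsetSums (↑A : Set ℕ) ↔
      n ≤ 2 * b1 + (2 ^ k - 1) * d ∧ n ∉ Bk := by
    intro n
    rw [hPA]
    simp [Set.mem_diff, Set.mem_Icc, hBk]
  ext n
  rw [Set.mem_diff, Set.mem_Icc,
    subsetSums_union_singleton_s17 A N hNA n]
  rw [hmem]
  simp only [hmem]
  rw [Bsplit n]
  constructor
  · rintro (⟨hle, hnB⟩ | ⟨m, ⟨hmle, hmB⟩, rfl⟩)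
    · refine ⟨⟨Nat.zero_le _, by linarith [key2]⟩, ?_⟩
      rintro (h | ⟨y, hy, rfl⟩)
      · exact hnB h
      · have := (memBk y hy).1
        linarith [key]
    · refine ⟨⟨Nat.zero_le _, by linarith [key2]⟩, ?_⟩
      rintro (h | ⟨y, hy, hEq⟩)
      · have := (memBk _ h).2
        omega
      · have : y = m := by omega
        exact hmB (this ▸ hy)
  · rintro ⟨⟨-, hle⟩, hnB⟩
    push_neg at hnB
    obtain ⟨hnB1, hnB2⟩ := hnB
    by_cases hc : n ≤ 2 * b1 + (2 ^ k - 1) * d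
    · exact Or.inl ⟨hc, hnB1⟩
    · right
      have hNn : N ≤ n := by
        -- N ≤ M1 + 1 ≤ n since n > M1
        have : N ≤ 2 * b1 + (2 ^ k - 1) * d + 1 := by linarith [key]
        omega
      refine ⟨n - N, ⟨?_, ?_⟩, by omega⟩
      · have := key2
        omega
      · intro h
        exact hnB2 _ h (by omega)
end

section
/- For every integer b with b ∈ {4, 7, 8} or b ≥ 11, there exists a finite set A of positive integers contained in [1, b − 1] such that P(A) = [0, b − 1]. -/
lemma insert_sums (A : Finset ℕ) (x s : ℕ) (hx : x ∉ A) (hx1 : 1 ≤ x)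
    (hxs : x ≤ s + 1) (h : subsetSums ↑A = Set.Icc 0 s) :
    subsetSums ↑(insert x A) = Set.Icc 0 (s + x) := by
  ext n
  simp only [subsetSums, Set.mem_setOf_eq, Set.mem_Icc]
  have hmem : ∀ m : ℕ, m ∈ subsetSums ↑A ↔ m ≤ s := by
    intro m; rw [h]; simp
  constructor
  · rintro ⟨F, hF, rfl⟩
    have hF' : F ⊆ insert x A := by
      intro a ha
      have := hF (Finset.mem_coe.mpr ha)
      simpa using this
    by_cases hxF : x ∈ F
    · have h1 : ↑(F.erase x) ⊆ (A : Set ℕ) := by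
        intro a ha
        simp only [Finset.coe_erase, Set.mem_diff] at ha
        have := hF' (ha.1)
        simp only [Finset.mem_insert] at this
        rcases this with h' | h'
        · exact absurd h' (by simpa using ha.2)
        · exact h'
      have h2 : (F.erase x).sum id ≤ s := (hmem _).mp ⟨F.erase x, h1, rfl⟩
      have h3 : (F.erase x).sum id + x = F.sum id := by
        have := Finset.sum_erase_add F id hxF
        simpa using this
      omega
    · have h1 : ↑F ⊆ (A : Set ℕ) := by
        intro a ha
        have := hF' (Finset.mem_coe.mp ha)
        simp only [Finset.mem_insert] at this
        rcases this with h' | h'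
        · exact absurd (h' ▸ ha) (by simpa using hxF)
        · exact h'
      have h2 : F.sum id ≤ s := (hmem _).mp ⟨F, h1, rfl⟩
      omega
  · rintro ⟨-, hn⟩
    by_cases hns : n ≤ s
    · obtain ⟨F, hF, hFs⟩ := (hmem n).mpr hns
      exact ⟨F, hF.trans (by simp), hFs⟩
    · have hxn : x ≤ n := by omega
      obtain ⟨F, hF, hFs⟩ := (hmem (n - x)).mpr (by omega)
      have hxF : x ∉ F := fun hmemF => hx (Finset.mem_coe.mp (hF (Finset.mem_coe.mpr hmemF)))
      refine ⟨insert x F, ?_, ?_⟩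
      · intro a ha
        simp only [Finset.coe_insert, Set.mem_insert_iff] at ha ⊢
        rcases ha with rfl | ha
        · exact Or.inl rfl
        · exact Or.inr (hF ha)
      · rw [Finset.sum_insert hxF]
        simp only [id] at hFs ⊢
        omega

def GoodSum (s : ℕ) : Prop :=
  ∃ A : Finset ℕ, ↑A ⊆ Set.Icc 1 s ∧ (∀ a ∈ A, 2 * a ≤ s + 1) ∧
    subsetSums ↑A = Set.Icc 0 s

lemma goodSum_zero : GoodSum 0 := by
  refine ⟨∅, by simp, by simp, ?_⟩
  ext n
  simp only [subsetSums, Set.mem_setOf_eq, Finset.coe_empty, Set.mem_Icc]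
  constructor
  · rintro ⟨F, hF, rfl⟩
    have : F = ∅ := Finset.subset_empty.mp (by exact_mod_cast Finset.coe_subset.mp (by simpa using hF))
    simp [this]
  · rintro ⟨-, hn⟩
    exact ⟨∅, by simp, by simp; omega⟩

lemma goodSum_step (t s : ℕ) (ht1 : t < s) (ht2 : s ≤ 2 * t + 1)
    (ht3 : 3 * t + 1 < 2 * s) (H : GoodSum t) : GoodSum s := by
  obtain ⟨A, hA1, hA2, hA3⟩ := H
  have hx : s - t ∉ A := by
    intro hmem
    have := hA2 _ hmem
    omega
  refine ⟨insert (s - t) A, ?_, ?_, ?_⟩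
  · intro a ha
    simp only [Finset.coe_insert, Set.mem_insert_iff] at ha
    rcases ha with rfl | ha
    · simp only [Set.mem_Icc]; omega
    · have := hA1 ha
      simp only [Set.mem_Icc] at this ⊢
      omega
  · intro a ha
    simp only [Finset.mem_insert] at ha
    rcases ha with rfl | ha
    · omega
    · have := hA2 a ha; omega
  · have h := insert_sums A (s - t) t hx (by omega) (by omega) hA3
    have heq : t + (s - t) = s := by omega
    rwa [heq] at h

lemma goodSum_of (s : ℕ) (hs : s = 3 ∨ s = 6 ∨ s = 7 ∨ 10 ≤ s) : GoodSum s := by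
  induction s using Nat.strong_induction_on with
  | _ s ih =>
  have h1 : GoodSum 1 := goodSum_step 0 1 (by omega) (by omega) (by omega) goodSum_zero
  have h3 : GoodSum 3 := goodSum_step 1 3 (by omega) (by omega) (by omega) h1
  rcases hs with rfl | rfl | rfl | h10
  · exact h3
  · exact goodSum_step 3 6 (by omega) (by omega) (by omega) h3
  · exact goodSum_step 3 7 (by omega) (by omega) (by omega) h3
  · have h6 : GoodSum 6 := goodSum_step 3 6 (by omega) (by omega) (by omega) h3
    have h7 : GoodSum 7 := goodSum_step 3 7 (by omega) (by omega) (by omega) h3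
    by_cases hc1 : s ≤ 13
    · exact goodSum_step 6 s (by omega) (by omega) (by omega) h6
    by_cases hc2 : s ≤ 15
    · exact goodSum_step 7 s (by omega) (by omega) (by omega) h7
    have h10' : GoodSum 10 := goodSum_step 6 10 (by omega) (by omega) (by omega) h6
    by_cases hc3 : s ≤ 21
    · exact goodSum_step 10 s (by omega) (by omega) (by omega) h10'
    · have hhalf : GoodSum (s / 2) :=
        ih (s / 2) (by omega) (by right; right; right; omega)
      exact goodSum_step (s / 2) s (by omega) (by omega) (by omega) hhalf

theorem stmt_18 (b : ℕ) (hb : b = 4 ∨ b = 7 ∨ b = 8 ∨ 11 ≤ b) :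
    ∃ A : Finset ℕ,
      ↑A ⊆ Set.Icc 1 (b - 1) ∧
      subsetSums ↑A = Set.Icc 0 (b - 1) := by
  have h : GoodSum (b - 1) := by
    apply goodSum_of
    omega
  obtain ⟨A, hA1, _, hA3⟩ := h
  exact ⟨A, hA1, hA3⟩
end
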